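/- arXiv:2102.03081 — 2 statements merged into one kernel-verified Lean document; each statement's English description precedes it below -/
import Mathlib

section
/- (Proposition 3.13 of the paper: infinite direct sums of strongly absolute bases are strongly absolute.) Let Λ be a normalized 1-unconditional coefficient quasi-norm (the sequence space) that is strongly absolute with function β, and for each j ∈ ℕ let N_j be a normalized K-unconditional coefficient quasi-norm that is strongly absolute with the same function α. Let D ≥ 1 be such that ∑_n |f(n)| ≤ D·N_j(f) for every j and every finitely supported f. For a finitely supported F : ℕ × ℕ → ℝ define the direct-sum quasi-norm M(F) = Λ(j ↦ N_j(F(j,·))). Then for every R > 0 and every finitely supported F, ∑_{j,n} |F(j,n)| ≤ max( β(R·D)·α(R·β(R·D))·sup_{j,n} |F(j,n)|, M(F)/R ); that is, M is strongly absolute with function R ↦ β(R·D)·α(R·β(R·D)). -/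
/-- A normalized `K`-unconditional coefficient quasi-norm on finitely supported
real sequences. -/
structure IsCoeffQuasiNorm (K : ℝ) (N : (ℕ →₀ ℝ) → ℝ) : Prop where
  nonneg : ∀ f, 0 ≤ N f
  eq_zero_iff : ∀ f, N f = 0 ↔ f = 0
  smul : ∀ (t : ℝ) (f : ℕ →₀ ℝ), N (t • f) = |t| * N f
  normalized : ∀ n : ℕ, N (Finsupp.single n 1) = 1
  uncond : ∀ f g : ℕ →₀ ℝ, (∀ n, |f n| ≤ |g n|) → N f ≤ K * N g

/-- `N` is strongly absolute with function `α`. -/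
def StronglyAbsolute (N : (ℕ →₀ ℝ) → ℝ) (α : ℝ → ℝ) : Prop :=
  ∀ R : ℝ, 0 < R → ∀ f : ℕ →₀ ℝ,
    ∑ n ∈ f.support, |f n| ≤ max (α R * ⨆ n, |f n|) (N f / R)

/-!
Let `H j = ∑ₙ |F j n|` be the row `ℓ¹`-norms, so that `∑_{j,n} |F j n| = ‖H‖₁`.
The domination `H j ≤ D · N_j (F j) = D · G j` and 1-unconditionality of `Λ` give
`Λ H ≤ D · Λ G`, so strong absoluteness of `Λ` at `R D` bounds `‖H‖₁` by `Λ G / R` or by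
`β(R D) · sup_j H j`. In the latter case, strong absoluteness of `N_j` at `R β(R D)`, with
`N_j (F j) = G j ≤ Λ G`, bounds each `H j` by `α(R β(R D)) · sup |F|` or `Λ G / (R β(R D))`.
-/

open Finset

namespace IsCoeffQuasiNorm

variable {K : ℝ} {N : (ℕ →₀ ℝ) → ℝ}

theorem apply_single (hN : IsCoeffQuasiNorm K N) (n : ℕ) (t : ℝ) :
    N (Finsupp.single n t) = |t| := by
  have hsingle : Finsupp.single n t = t • Finsupp.single n 1 := by
    rw [Finsupp.smul_single, smul_eq_mul, mul_one]
  rw [hsingle, hN.smul, hN.normalized, mul_one]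

theorem abs_apply_le (hN : IsCoeffQuasiNorm K N) (f : ℕ →₀ ℝ) (n : ℕ) :
    |f n| ≤ K * N f := by
  rw [← hN.apply_single n (f n)]
  refine hN.uncond _ _ fun m => ?_
  rcases eq_or_ne m n with rfl | hmn
  · rw [Finsupp.single_eq_same]
  · rw [Finsupp.single_eq_of_ne hmn, abs_zero]
    exact abs_nonneg _

theorem apply_le_mul_of_abs_le (hN : IsCoeffQuasiNorm 1 N) {c : ℝ} (hc : 0 ≤ c)
    {f g : ℕ →₀ ℝ} (h : ∀ n, |f n| ≤ c * g n) : N f ≤ c * N g := by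
  calc N f ≤ 1 * N (c • g) :=
        hN.uncond _ _ fun n => (h n).trans <| by
          rw [Finsupp.smul_apply, smul_eq_mul, abs_mul, abs_of_nonneg hc]
          exact mul_le_mul_of_nonneg_left (le_abs_self _) hc
    _ = c * N g := by rw [one_mul, hN.smul, abs_of_nonneg hc]

end IsCoeffQuasiNorm

theorem StronglyAbsolute.sum_abs_le_max_of_le {N : (ℕ →₀ ℝ) → ℝ} {α : ℝ → ℝ}
    (hN : StronglyAbsolute N α) {R : ℝ} (hR : 0 < R) (hα : 0 ≤ α R) {f : ℕ →₀ ℝ} {s L : ℝ}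
    (hs : ⨆ n, |f n| ≤ s) (hL : N f ≤ L) :
    ∑ n ∈ f.support, |f n| ≤ max (α R * s) (L / R) :=
  (hN R hR f).trans (max_le_max (by gcongr) (by gcongr))

namespace Finsupp

noncomputable def rowL1Norm (F : ℕ →₀ (ℕ →₀ ℝ)) : ℕ →₀ ℝ :=
  F.mapRange (fun f => ∑ n ∈ f.support, |f n|) (by simp)

variable (F : ℕ →₀ (ℕ →₀ ℝ))

theorem rowL1Norm_apply (j : ℕ) : rowL1Norm F j = ∑ n ∈ (F j).support, |F j n| := rfl

theorem rowL1Norm_nonneg (j : ℕ) : 0 ≤ rowL1Norm F j :=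
  sum_nonneg fun _ _ => abs_nonneg _

theorem sum_abs_rowL1Norm :
    ∑ j ∈ (rowL1Norm F).support, |rowL1Norm F j| =
      ∑ j ∈ F.support, ∑ n ∈ (F j).support, |F j n| := by
  refine sum_subset_zero_on_sdiff support_mapRange (fun j hj => ?_) fun j _ => ?_
  · simpa [rowL1Norm_apply] using (mem_sdiff.mp hj).2
  · rw [abs_of_nonneg (rowL1Norm_nonneg F j), rowL1Norm_apply]

theorem iSup_abs_apply_le_iSup_iSup (j : ℕ) :
    ⨆ n, |F j n| ≤ ⨆ i, ⨆ n, |F i n| := by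
  refine le_ciSup (f := fun i => ⨆ n, |F i n|) ?_ j
  have hfin := F.finite_range.image fun f : ℕ →₀ ℝ => ⨆ n, |f n|
  rw [← Set.range_comp] at hfin
  exact hfin.bddAbove

end Finsupp

theorem stmt3_general (D : ℝ) (hD : 1 ≤ D)
    (Λ : (ℕ →₀ ℝ) → ℝ) (β : ℝ → ℝ) (hΛ : IsCoeffQuasiNorm 1 Λ)
    (hβ : ∀ R : ℝ, 0 < R → 0 < β R) (hΛSA : StronglyAbsolute Λ β)
    (Nf : ℕ → (ℕ →₀ ℝ) → ℝ) (α : ℝ → ℝ) (hα : ∀ R : ℝ, 0 < R → 0 < α R)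
    (hNfSA : ∀ j, StronglyAbsolute (Nf j) α)
    (hdom : ∀ (j : ℕ) (f : ℕ →₀ ℝ), ∑ n ∈ f.support, |f n| ≤ D * Nf j f) :
    ∀ R : ℝ, 0 < R → ∀ F : ℕ →₀ (ℕ →₀ ℝ), ∀ G : ℕ →₀ ℝ,
      (∀ j, G j = Nf j (F j)) →
      ∑ j ∈ F.support, ∑ n ∈ (F j).support, |F j n| ≤
        max (β (R * D) * α (R * β (R * D)) * ⨆ j, ⨆ n, |F j n|) (Λ G / R) := by
  intro R hR F G hG
  set S := ⨆ j, ⨆ n, |F j n|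
  set B := β (R * D)
  have hD0 : 0 < D := one_pos.trans_le hD
  have hB : 0 < B := hβ _ (mul_pos hR hD0)
  have hRB : 0 < R * B := mul_pos hR hB
  have hrow : ∀ j, |F.rowL1Norm j| ≤ max (α (R * B) * S) (Λ G / (R * B)) := by
    intro j
    rw [abs_of_nonneg (F.rowL1Norm_nonneg j)]
    refine (hNfSA j).sum_abs_le_max_of_le hRB (hα _ hRB).le
      (F.iSup_abs_apply_le_iSup_iSup j) ?_
    calc Nf j (F j) = G j := (hG j).symm
      _ ≤ |G j| := le_abs_self _
      _ ≤ Λ G := by simpa using hΛ.abs_apply_le G j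
  have hΛrow : Λ F.rowL1Norm ≤ D * Λ G :=
    hΛ.apply_le_mul_of_abs_le hD0.le fun j => by
      rw [abs_of_nonneg (F.rowL1Norm_nonneg j), hG]
      exact hdom j (F j)
  rw [← F.sum_abs_rowL1Norm]
  refine (hΛSA _ (mul_pos hR hD0) F.rowL1Norm).trans (max_le ?_ ?_)
  · calc B * ⨆ j, |F.rowL1Norm j| ≤ B * max (α (R * B) * S) (Λ G / (R * B)) := by
          gcongr; exact ciSup_le hrow
      _ = max (B * α (R * B) * S) (Λ G / R) := by
          rw [mul_max_of_nonneg _ _ hB.le, mul_assoc]; field_simp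
  · calc Λ F.rowL1Norm / (R * D) ≤ D * Λ G / (R * D) := by gcongr
      _ = Λ G / R := by field_simp
      _ ≤ _ := le_max_right _ _

/-- Proposition 3.13: infinite direct sums of strongly absolute bases
are strongly absolute.  A finitely supported `F : ℕ × ℕ → ℝ` is encoded as
`F : ℕ →₀ (ℕ →₀ ℝ)`; the direct-sum quasi-norm is `M F = Λ (j ↦ N_j (F j))`, where
`G : ℕ →₀ ℝ` with `G j = N_j (F j)` for all `j` represents the inner sequence. -/
theorem stmt3 (K D : ℝ) (hK : 1 ≤ K) (hD : 1 ≤ D)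
    (Λ : (ℕ →₀ ℝ) → ℝ) (β : ℝ → ℝ) (hΛ : IsCoeffQuasiNorm 1 Λ)
    (hβ : ∀ R : ℝ, 0 < R → 0 < β R) (hΛSA : StronglyAbsolute Λ β)
    (Nf : ℕ → (ℕ →₀ ℝ) → ℝ) (α : ℝ → ℝ) (hα : ∀ R : ℝ, 0 < R → 0 < α R)
    (hNf : ∀ j, IsCoeffQuasiNorm K (Nf j))
    (hNfSA : ∀ j, StronglyAbsolute (Nf j) α)
    (hdom : ∀ (j : ℕ) (f : ℕ →₀ ℝ), ∑ n ∈ f.support, |f n| ≤ D * Nf j f) :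
    ∀ R : ℝ, 0 < R → ∀ F : ℕ →₀ (ℕ →₀ ℝ), ∀ G : ℕ →₀ ℝ,
      (∀ j, G j = Nf j (F j)) →
      ∑ j ∈ F.support, ∑ n ∈ (F j).support, |F j n| ≤
        max (β (R * D) * α (R * β (R * D)) * ⨆ j, ⨆ n, |F j n|) (Λ G / R) :=
  stmt3_general D hD Λ β hΛ hβ hΛSA Nf α hα hNfSA hdom
end

section
/- (Proposition 6.7 of the paper, case q = 1.) Let N be a normalized K-unconditional coefficient quasi-norm that is 1-concave with constant C, and set s_m = inf{ N(1_A) : A ⊆ ℕ finite, |A| ≥ m } for m ≥ 1 (the lower democracy function). If lim_{m→∞} s_m/m = ∞, then N is strongly absolute: for every R > 0 there exists C′ > 0 such that every finitely supported f : ℕ → ℝ satisfies ‖f‖₁ ≤ max( C′·‖f‖_∞, N(f)/R ). -/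
/-- The lower democracy function: `s_m = inf {N(1_A) : A ⊆ ℕ finite, |A| ≥ m}`. -/
noncomputable def lowerDem (N : (ℕ →₀ ℝ) → ℝ) (m : ℕ) : ℝ :=
  sInf {x | ∃ A : Finset ℕ, m ≤ A.card ∧ x = N (∑ n ∈ A, Finsupp.single n 1)}

/-!
With `t = ‖f‖_∞`, split `f` into the dyadic pieces `g_j` on which `|f|` lies in
`[t / 2^(j+1), t / 2^j]`. If `s_k ≥ L k` for all `k ≥ m`, a piece with at least `m` points has
`‖g_j‖₁ ≤ |supp g_j| · t / 2^j ≤ (2K / L) N(g_j)`, by unconditionality against the indicator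
of its support, while a smaller piece has `‖g_j‖₁ ≤ m t / 2^j`. Summing the geometric series and
bounding `∑ N(g_j) ≤ C N(f)` by `1`-concavity gives `‖f‖₁ ≤ 2 m t + (2KC / L) N(f)`; the choice
`L = 4KCR` makes this at most `max (4 m t) (N(f) / R)`.
-/

open Filter Finset

def IsOneConcave (C : ℝ) (N : (ℕ →₀ ℝ) → ℝ) : Prop :=
  ∀ (k : ℕ) (f : Fin k → (ℕ →₀ ℝ)),
    (∀ i j, i ≠ j → Disjoint (f i).support (f j).support) → ∑ i, N (f i) ≤ C * N (∑ i, f i)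

def IsStronglyAbsolute (N : (ℕ →₀ ℝ) → ℝ) : Prop :=
  ∀ R : ℝ, 0 < R → ∃ C' > 0, ∀ f : ℕ →₀ ℝ,
    ∑ n ∈ f.support, |f n| ≤ max (C' * ⨆ n, |f n|) (N f / R)

namespace Finsupp

variable {α β M : Type*} [AddCommMonoid M] [DecidableEq β]

theorem sum_filter_fiber (f : α →₀ M) (φ : α → β) :
    ∑ j ∈ f.support.image φ, f.filter (fun a => φ a = j) = f := by
  classical
  ext a
  rw [finsetSum_apply]
  by_cases ha : a ∈ f.support
  · rw [Finset.sum_eq_single (φ a)]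
    · exact filter_apply_pos _ _ rfl
    · exact fun j _ hj => filter_apply_neg _ _ (Ne.symm hj)
    · exact fun h => absurd (mem_image_of_mem φ ha) h
  · rw [notMem_support_iff.mp ha]
    exact Finset.sum_eq_zero fun j _ => by
      rw [filter_apply]; split_ifs <;> simp [notMem_support_iff.mp ha]

theorem sum_support_eq_sum_fiber {S : Type*} [AddCommMonoid S] (f : α →₀ M) (φ : α → β)
    (h : M → S) :
    ∑ a ∈ f.support, h (f a) =
      ∑ j ∈ f.support.image φ, ∑ a ∈ (f.filter fun a => φ a = j).support,
        h (f.filter (fun a => φ a = j) a) := by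
  rw [← sum_fiberwise_of_maps_to fun a ha => mem_image_of_mem φ ha]
  refine Finset.sum_congr rfl fun j _ => ?_
  rw [support_filter]
  exact Finset.sum_congr rfl fun a ha =>
    by rw [filter_apply_pos (fun a => φ a = j) f (mem_filter.1 ha).2]

theorem pairwiseDisjoint_support_filter_fiber (f : α →₀ M) (φ : α → β) (s : Set β) :
    s.PairwiseDisjoint fun j => (f.filter fun a => φ a = j).support := by
  intro i _ j _ hij
  simp only [support_filter]
  exact disjoint_filter.2 fun a _ hi hj => hij (hi.symm.trans hj)

end Finsupp

theorem mem_Icc_div_two_div_two_pow_log_floor {x t : ℝ} (hx : 0 < x) (hxt : x ≤ t) :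
    x ∈ Set.Icc (t / 2 / 2 ^ Nat.log 2 ⌊t / x⌋₊) (2 * (t / 2 / 2 ^ Nat.log 2 ⌊t / x⌋₊)) := by
  have hr : 1 ≤ t / x := (one_le_div hx).2 hxt
  set j := Nat.log 2 ⌊t / x⌋₊
  have hlog : Int.log 2 (t / x) = j := Int.log_of_one_le_right 2 hr
  have hle := Int.zpow_log_le_self (R := ℝ) one_lt_two (by linarith : 0 < t / x)
  have hlt := Int.lt_zpow_succ_log_self (R := ℝ) one_lt_two (t / x)
  rw [hlog, Nat.cast_ofNat, zpow_natCast, le_div_iff₀ hx] at hle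
  rw [hlog, ← Nat.cast_succ, Nat.cast_ofNat, zpow_natCast, pow_succ, div_lt_iff₀ hx] at hlt
  have htwo : 2 * (t / 2 / 2 ^ j) = t / 2 ^ j := by ring
  constructor
  · rw [div_div, div_le_iff₀ (by positivity)]
    linarith
  · rw [htwo, le_div_iff₀ (by positivity)]
    linarith

theorem sum_div_two_div_two_pow_le {t : ℝ} (ht : 0 ≤ t) (s : Finset ℕ) :
    ∑ j ∈ s, t / 2 / 2 ^ j ≤ t :=
  ((summable_geometric_two' t).sum_le_tsum s fun j _ => by positivity).trans_eq
    (tsum_geometric_two' t)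

theorem exists_forall_mul_le_of_tendsto_div {u : ℕ → ℝ}
    (hu : Tendsto (fun m : ℕ => u m / m) atTop atTop) (L : ℝ) :
    ∃ m : ℕ, 0 < m ∧ ∀ k, m ≤ k → L * k ≤ u k := by
  obtain ⟨m, hm⟩ := eventually_atTop.mp (hu.eventually_ge_atTop L)
  refine ⟨m + 1, m.succ_pos, fun k hk => ?_⟩
  have hk0 : (0 : ℝ) < k := by exact_mod_cast (show 0 < k by omega)
  exact (le_div_iff₀ hk0).mp (hm k (by omega))

namespace IsOneConcave

variable {C : ℝ} {N : (ℕ →₀ ℝ) → ℝ}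

theorem sum_le_mul_sum {ι : Type*} (hconc : IsOneConcave C N) (s : Finset ι)
    (g : ι → ℕ →₀ ℝ) (hdisj : (s : Set ι).PairwiseDisjoint fun i => (g i).support) :
    ∑ i ∈ s, N (g i) ≤ C * N (∑ i ∈ s, g i) := by
  set e := s.equivFin
  have h := hconc s.card (fun k => g (e.symm k)) fun i j hij =>
    hdisj (e.symm i).2 (e.symm j).2 fun h => hij (e.symm.injective (Subtype.ext h))
  rwa [← sum_coe_sort s, ← sum_coe_sort s, ← e.symm.sum_comp, ← e.symm.sum_comp]

theorem one_le {K : ℝ} (hconc : IsOneConcave C N) (hN : IsCoeffQuasiNorm K N) : 1 ≤ C := by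
  simpa [hN.normalized] using hconc 1 (fun _ => Finsupp.single 0 1) (by simp)

end IsOneConcave

namespace IsCoeffQuasiNorm

variable {K : ℝ} {N : (ℕ →₀ ℝ) → ℝ}

theorem one_le (hN : IsCoeffQuasiNorm K N) : 1 ≤ K := by
  simpa [hN.normalized] using hN.uncond (Finsupp.single 0 1) (Finsupp.single 0 1) fun _ => le_rfl

theorem lowerDem_card_le (hN : IsCoeffQuasiNorm K N) (A : Finset ℕ) :
    lowerDem N A.card ≤ N (∑ n ∈ A, Finsupp.single n 1) :=
  csInf_le ⟨0, by rintro x ⟨B, -, rfl⟩; exact hN.nonneg _⟩ ⟨A, le_rfl, rfl⟩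

theorem mul_lowerDem_card_support_le (hN : IsCoeffQuasiNorm K N) {g : ℕ →₀ ℝ} {c : ℝ}
    (hc : 0 ≤ c) (hg : ∀ n ∈ g.support, c ≤ |g n|) :
    c * lowerDem N g.support.card ≤ K * N g := by
  have hdom : ∀ n, |(c • ∑ a ∈ g.support, Finsupp.single a (1 : ℝ)) n| ≤ |g n| := by
    intro n
    by_cases hn : n ∈ g.support
    · simpa [Finsupp.finsetSum_apply, Finsupp.single_apply, hn, abs_of_nonneg hc] using hg n hn
    · simp [Finsupp.single_apply, hn]
  calc c * lowerDem N g.support.card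
      ≤ c * N (∑ a ∈ g.support, Finsupp.single a 1) :=
        mul_le_mul_of_nonneg_left (hN.lowerDem_card_le _) hc
    _ = N (c • ∑ a ∈ g.support, Finsupp.single a 1) := by rw [hN.smul, abs_of_nonneg hc]
    _ ≤ K * N g := hN.uncond _ _ hdom

variable {L : ℝ} {m : ℕ}

theorem sum_abs_le_of_abs_mem_Icc (hN : IsCoeffQuasiNorm K N) (hL : 0 < L)
    (hdem : ∀ k, m ≤ k → L * k ≤ lowerDem N k) {g : ℕ →₀ ℝ} {c : ℝ} (hc : 0 ≤ c)
    (hg : ∀ n ∈ g.support, |g n| ∈ Set.Icc c (2 * c)) :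
    ∑ n ∈ g.support, |g n| ≤ 2 * m * c + 2 * K / L * N g := by
  have hK : 0 ≤ K := zero_le_one.trans hN.one_le
  have hNg := hN.nonneg g
  have hcard : ∑ n ∈ g.support, |g n| ≤ 2 * g.support.card * c := by
    simpa [nsmul_eq_mul, mul_comm, mul_left_comm] using
      sum_le_card_nsmul _ _ _ fun n hn => (hg n hn).2
  by_cases hm : m ≤ g.support.card
  · have hlarge : c * (L * g.support.card) ≤ K * N g :=
      (mul_le_mul_of_nonneg_left (hdem _ hm) hc).trans
        (hN.mul_lowerDem_card_support_le hc fun n hn => (hg n hn).1)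
    have : 2 * g.support.card * c ≤ 2 * K / L * N g := by
      rw [div_mul_eq_mul_div, le_div_iff₀ hL]
      linarith
    have : 0 ≤ 2 * m * c := by positivity
    linarith
  · have : 2 * g.support.card * c ≤ 2 * m * c := by
      gcongr
      exact_mod_cast (not_le.mp hm).le
    have : 0 ≤ 2 * K / L * N g := by positivity
    linarith

theorem sum_abs_le_of_forall_mul_le_lowerDem {C : ℝ} (hN : IsCoeffQuasiNorm K N)
    (hconc : IsOneConcave C N) (hL : 0 < L) (hdem : ∀ k, m ≤ k → L * k ≤ lowerDem N k)
    {f : ℕ →₀ ℝ} {t : ℝ} (ht : ∀ n, |f n| ≤ t) :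
    ∑ n ∈ f.support, |f n| ≤ 2 * m * t + 2 * K / L * (C * N f) := by
  have ht0 : 0 ≤ t := (abs_nonneg _).trans (ht 0)
  set level : ℕ → ℕ := fun n => Nat.log 2 ⌊t / |f n|⌋₊
  set J := f.support.image level
  set g : ℕ → ℕ →₀ ℝ := fun j => f.filter fun n => level n = j
  have hg : ∀ j n, level n = j → g j n = f n := fun j n h => Finsupp.filter_apply_pos _ _ h
  have hpiece : ∀ j ∈ J,
      ∑ n ∈ (g j).support, |g j n| ≤ 2 * m * (t / 2 / 2 ^ j) + 2 * K / L * N (g j) := by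
    intro j _
    refine hN.sum_abs_le_of_abs_mem_Icc hL hdem (by positivity) fun n hn => ?_
    rw [Finsupp.support_filter, mem_filter] at hn
    rw [hg j n hn.2, ← hn.2]
    exact mem_Icc_div_two_div_two_pow_log_floor
      (abs_pos.2 (Finsupp.mem_support_iff.1 hn.1)) (ht n)
  have hconcave : ∑ j ∈ J, N (g j) ≤ C * N f := by
    have hsum : ∑ j ∈ J, g j = f := Finsupp.sum_filter_fiber f level
    simpa only [hsum] using
      hconc.sum_le_mul_sum J g (Finsupp.pairwiseDisjoint_support_filter_fiber f level _)
  have hK : 0 ≤ 2 * K / L := div_nonneg (by linarith [hN.one_le]) hL.le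
  calc ∑ n ∈ f.support, |f n|
      = ∑ j ∈ J, ∑ n ∈ (g j).support, |g j n| := Finsupp.sum_support_eq_sum_fiber f level abs
    _ ≤ ∑ j ∈ J, (2 * m * (t / 2 / 2 ^ j) + 2 * K / L * N (g j)) := sum_le_sum hpiece
    _ ≤ 2 * m * t + 2 * K / L * (C * N f) := by
        rw [sum_add_distrib, ← mul_sum, ← mul_sum]
        gcongr
        exact sum_div_two_div_two_pow_le ht0 J

end IsCoeffQuasiNorm

theorem IsStronglyAbsolute.of_tendsto_lowerDem_div {K C : ℝ} {N : (ℕ →₀ ℝ) → ℝ}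
    (hN : IsCoeffQuasiNorm K N) (hconc : IsOneConcave C N)
    (hlim : Tendsto (fun m : ℕ => lowerDem N m / m) atTop atTop) :
    IsStronglyAbsolute N := by
  intro R hR
  have hK := hN.one_le
  have hC := hconc.one_le hN
  obtain ⟨m, hm, hdem⟩ := exists_forall_mul_le_of_tendsto_div hlim (4 * K * C * R)
  refine ⟨4 * m, by positivity, fun f => ?_⟩
  have hbdd : BddAbove (Set.range fun n => |f n|) :=
    (Set.range_comp abs f ▸ f.finite_range.image abs).bddAbove
  have hbound := hN.sum_abs_le_of_forall_mul_le_lowerDem hconc (by positivity) hdem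
    (le_ciSup hbdd)
  have hconst : 2 * K / (4 * K * C * R) * (C * N f) = N f / R / 2 := by
    field_simp
    ring
  rw [hconst] at hbound
  have := le_max_left (4 * m * ⨆ n, |f n|) (N f / R)
  have := le_max_right (4 * m * ⨆ n, |f n|) (N f / R)
  linarith

theorem stmt14_general (K C : ℝ)
    (N : (ℕ →₀ ℝ) → ℝ) (hN : IsCoeffQuasiNorm K N)
    (hconc : ∀ (k : ℕ) (f : Fin k → (ℕ →₀ ℝ)),
      (∀ i j, i ≠ j → Disjoint (f i).support (f j).support) →
      ∑ i, N (f i) ≤ C * N (∑ i, f i))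
    (hlim : Filter.Tendsto (fun m : ℕ => lowerDem N m / m)
      Filter.atTop Filter.atTop) :
    ∀ R : ℝ, 0 < R → ∃ C' > 0, ∀ f : ℕ →₀ ℝ,
      ∑ n ∈ f.support, |f n| ≤ max (C' * ⨆ n, |f n|) (N f / R) :=
  IsStronglyAbsolute.of_tendsto_lowerDem_div hN hconc hlim

/-- Proposition 6.7, case `q = 1`: if `N` is `1`-concave with
constant `C` and its lower democracy function satisfies `s_m/m → ∞`, then `N` is
strongly absolute. -/
theorem stmt14 (K C : ℝ) (hK : 1 ≤ K) (hC : 1 ≤ C)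
    (N : (ℕ →₀ ℝ) → ℝ) (hN : IsCoeffQuasiNorm K N)
    (hconc : ∀ (k : ℕ) (f : Fin k → (ℕ →₀ ℝ)),
      (∀ i j, i ≠ j → Disjoint (f i).support (f j).support) →
      ∑ i, N (f i) ≤ C * N (∑ i, f i))
    (hlim : Filter.Tendsto (fun m : ℕ => lowerDem N m / m)
      Filter.atTop Filter.atTop) :
    ∀ R : ℝ, 0 < R → ∃ C' > 0, ∀ f : ℕ →₀ ℝ,
      ∑ n ∈ f.support, |f n| ≤ max (C' * ⨆ n, |f n|) (N f / R) :=
  stmt14_general K C N hN hconc hlim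
end
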